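/- arXiv:2005.00445 — 2 statements merged into one kernel-verified Lean document; each statement's English description precedes it below -/
import Mathlib

section
/- Consider two items of unit size with cache capacity C = 2 and backhaul capacity L = 1 (one item updated per slot). Item 1 has utility f_1(0) = 2k and f_1(a) = 0 for a ≥ 1, where k > 1. Item 2 has utility f_2(a) = k for a ≤ t and f_2(a) = 0 for a > t. Over a horizon of T = t slots, the greedy schedule that updates item 1 in every slot achieves total utility 2kt, while the schedule that caches item 2 in slot 1 and then downloads and keeps updating item 1 in slots 2,...,t achieves total utility 3kt - 2k. Hence for t > 2 the greedy schedule is strictly suboptimal. -/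
/-- Two unit-size items, `C = 2`, `L = 1`, horizon `T = t ≥ 1`.
Item 1: `f₁(0) = 2k`, `f₁(a) = 0` for `a ≥ 1` (`k > 1`).
Item 2: `f₂(a) = k` for `a ≤ t`, else `0`.
The greedy schedule (update item 1 every slot) earns `2kt`; the schedule caching
item 2 in slot 1 (ages `0,…,t-1` thereafter) and downloading and updating item 1
in slots `2,…,t` earns `kt + 2k(t-1) = 3kt - 2k`; hence greedy is strictly
suboptimal for `t > 2`. -/
theorem greedy_counterexample (k : ℝ) (hk : 1 < k) (t : ℕ) (ht : 1 ≤ t) :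
    let f1 : ℕ → ℝ := fun a => if a = 0 then 2 * k else 0
    let f2 : ℕ → ℝ := fun a => if a ≤ t then k else 0
    (∑ _s ∈ Finset.Icc 1 t, f1 0) = 2 * k * t ∧
    ((∑ s ∈ Finset.Icc 1 t, f2 (s - 1)) + ∑ _s ∈ Finset.Icc 2 t, f1 0) = 3 * k * t - 2 * k ∧
    (2 < t → 2 * k * t < 3 * k * t - 2 * k) := by
  intro f1 f2
  have card_Icc_two : ((Finset.Icc 2 t).card : ℝ) = t - 1 := by
    rw [Nat.card_Icc, Nat.cast_sub (by omega)]
    push_cast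
    ring
  have item2_utility : ∑ s ∈ Finset.Icc 1 t, f2 (s - 1) = k * t := by
    rw [Finset.sum_congr rfl fun s hs =>
      if_pos ((Nat.sub_le s 1).trans (Finset.mem_Icc.mp hs).2)]
    simp [mul_comm]
  refine ⟨by simp [f1, mul_comm], ?_, fun ht2 => ?_⟩
  · simp only [f1, if_pos, Finset.sum_const, nsmul_eq_mul, item2_utility, card_Icc_two]
    ring
  · have gap_pos : 0 < k * (t - 2) :=
      mul_pos (zero_lt_one.trans hk) (sub_pos.mpr (by exact_mod_cast ht2))
    linarith
end

section
/- In the uniform-size caching problem with nondecreasing-in-freshness utilities (f_i monotonically decreasing in age, f_i ≥ 0), if in some slot fewer than min(L, I - number of items updated) items are downloaded and the backhaul capacity is not fully used while some item is outside the cache or has positive age, then the schedule can be modified to use the full backhaul capacity without decreasing total utility. In particular there exists an optimal schedule in which exactly min(L, I) items are downloaded in every slot. -/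
/-- A feasible uniform-size caching schedule: `H t` is the cache content of slot `t`,
`D t` the items downloaded (age 0) in slot `t`. -/
structure USchedule (ι : Type*) [Fintype ι] [DecidableEq ι] (C L : ℕ) where
  H : ℕ → Finset ι
  D : ℕ → Finset ι
  hD : ∀ t, D t ⊆ H t
  hC : ∀ t, (H t).card ≤ C
  hL : ∀ t, (D t).card ≤ L
  hCont : ∀ t, H (t + 1) \ D (t + 1) ⊆ H t
  hInit : H 0 = ∅

/-- Age of item `i` in slot `t`: `0` if downloaded in slot `t`, else previous age + 1. -/
def uage {ι : Type*} [Fintype ι] [DecidableEq ι] {C L : ℕ}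
    (sch : USchedule ι C L) (i : ι) : ℕ → ℕ
  | 0 => 0
  | t + 1 => if i ∈ sch.D (t + 1) then 0 else uage sch i t + 1

/-- Total utility over slots `1,…,T`. -/
noncomputable def uutil {ι : Type*} [Fintype ι] [DecidableEq ι] {C L : ℕ}
    (f : ι → ℕ → ℝ) (T : ℕ) (sch : USchedule ι C L) : ℝ :=
  ∑ t ∈ Finset.Icc 1 T, ∑ i ∈ sch.H t, f i (uage sch i t)

/-!
Enlarging the download sets never hurts: downloading more items can only lower every age, and
enlarging the caches accordingly only adds nonnegative terms. So in every slot the downloads can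
be completed to exactly `L` items (taken from the cache if it is large enough, otherwise all of the
cache plus new items), keeping the cache within capacity. An optimal schedule exists because the
utility over `T` slots depends only on the finitely many values of `H` and `D` at slots `≤ T`;
completing its downloads keeps it optimal.
-/

open Finset

theorem Finset.exists_superset_card_eq_union_card_le {α : Type*} [Fintype α] [DecidableEq α]
    {A B : Finset α} {L C : ℕ} (hAB : A ⊆ B) (hA : #A ≤ L) (hB : #B ≤ C) (hLC : L ≤ C)
    (hL : L ≤ Fintype.card α) :
    ∃ E, A ⊆ E ∧ #E = L ∧ #(B ∪ E) ≤ C := by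
  rcases le_or_gt L #B with hLB | hBL
  · obtain ⟨E, hAE, hEB, hE⟩ := exists_subsuperset_card_eq hAB hA hLB
    exact ⟨E, hAE, hE, by rwa [union_eq_left.mpr hEB]⟩
  · obtain ⟨E, hBE, -, hE⟩ := exists_subsuperset_card_eq (subset_univ B) hBL.le (by simpa)
    exact ⟨E, hAB.trans hBE, hE, by rwa [union_eq_right.mpr hBE, hE]⟩

theorem Function.FactorsThrough.exists_forall_le {α β γ : Type*} [LinearOrder β] [Finite γ]
    [Nonempty α] {u : α → β} {Φ : α → γ} (hu : u.FactorsThrough Φ) :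
    ∃ a, ∀ b, u b ≤ u a := by
  obtain ⟨a₀⟩ := ‹Nonempty α›
  set g := Function.extend Φ u fun _ => u a₀
  obtain ⟨_, ⟨a, rfl⟩, ha⟩ :=
    (Set.range Φ).exists_max_image g (Set.toFinite _) ⟨Φ a₀, a₀, rfl⟩
  refine ⟨a, fun b => ?_⟩
  simpa only [g, hu.extend_apply] using ha (Φ b) ⟨b, rfl⟩

namespace USchedule

variable {ι : Type*} [Fintype ι] [DecidableEq ι] {C L : ℕ}

instance : Inhabited (USchedule ι C L) :=
  ⟨⟨fun _ => ∅, fun _ => ∅, fun _ => subset_rfl, fun _ => by simp, fun _ => by simp,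
    fun _ => by simp, rfl⟩⟩

def enlarge (s : USchedule ι C L) (E : ℕ → Finset ι) (hDE : ∀ t, s.D t ⊆ E t) (hE₀ : E 0 = ∅)
    (hC : ∀ t, #(s.H t ∪ E t) ≤ C) (hL : ∀ t, #(E t) ≤ L) : USchedule ι C L where
  H t := s.H t ∪ E t
  D := E
  hD _ := subset_union_right
  hC := hC
  hL := hL
  hCont t i hi := by
    obtain ⟨hiHE, hiE⟩ := mem_sdiff.mp hi
    have hiH : i ∈ s.H (t + 1) := (mem_union.mp hiHE).resolve_right hiE
    exact mem_union_left _ (s.hCont t (mem_sdiff.mpr ⟨hiH, fun hiD => hiE (hDE _ hiD)⟩))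
  hInit := by simp [s.hInit, hE₀]

theorem exists_superset_card_D_eq (s : USchedule ι C L) (hLC : L ≤ C)
    (hL : L ≤ Fintype.card ι) :
    ∃ s' : USchedule ι C L, (∀ t, s.H t ⊆ s'.H t) ∧ (∀ t, s.D t ⊆ s'.D t) ∧
      ∀ t, t ≠ 0 → #(s'.D t) = L := by
  choose E hDE hE hHE using fun t =>
    exists_superset_card_eq_union_card_le (s.hD t) (s.hL t) (s.hC t) hLC hL
  -- Slot `0` must stay empty, and `D 0 ⊆ H 0 = ∅` anyway.
  let E' t := if t = 0 then ∅ else E t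
  have hDE' : ∀ t, s.D t ⊆ E' t := by
    rintro (_ | t)
    · simpa [E', s.hInit] using s.hD 0
    · exact hDE _
  have hHE' : ∀ t, #(s.H t ∪ E' t) ≤ C := by
    rintro (_ | t)
    · simp [E', s.hInit]
    · exact hHE _
  have hE' : ∀ t, #(E' t) ≤ L := by
    rintro (_ | t)
    · simp [E']
    · exact (hE _).le
  refine ⟨s.enlarge E' hDE' (by simp [E']) hHE' hE', fun t => subset_union_left, hDE',
    fun t ht => ?_⟩
  simp [enlarge, E', ht, hE]

theorem uage_le_of_D_subset {s s' : USchedule ι C L} (hD : ∀ t, s.D t ⊆ s'.D t) (i : ι) :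
    ∀ t, uage s' i t ≤ uage s i t
  | 0 => le_rfl
  | t + 1 => by
    have ih := uage_le_of_D_subset hD i t
    by_cases h' : i ∈ s'.D (t + 1)
    · simp [uage, h']
    · have h : i ∉ s.D (t + 1) := fun h => h' (hD _ h)
      simpa [uage, h', h] using ih

theorem uutil_le_of_subset {f : ι → ℕ → ℝ} (hmono : ∀ i a a', a ≤ a' → f i a' ≤ f i a)
    (hnn : ∀ i a, 0 ≤ f i a) (T : ℕ) {s s' : USchedule ι C L} (hH : ∀ t, s.H t ⊆ s'.H t)
    (hD : ∀ t, s.D t ⊆ s'.D t) : uutil f T s ≤ uutil f T s' := by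
  refine sum_le_sum fun t _ => ?_
  calc ∑ i ∈ s.H t, f i (uage s i t)
      ≤ ∑ i ∈ s.H t, f i (uage s' i t) :=
        sum_le_sum fun i _ => hmono i _ _ (uage_le_of_D_subset hD i t)
    _ ≤ ∑ i ∈ s'.H t, f i (uage s' i t) :=
        sum_le_sum_of_subset_of_nonneg (hH t) fun i _ _ => hnn i _

theorem uage_congr {s s' : USchedule ι C L} {n : ℕ} (hD : ∀ t ≤ n, s.D t = s'.D t) (i : ι) :
    ∀ t ≤ n, uage s i t = uage s' i t
  | 0, _ => rfl
  | t + 1, ht => by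
    simp only [uage, hD (t + 1) ht, uage_congr hD i t (by omega)]

theorem uutil_factorsThrough (f : ι → ℕ → ℝ) (T : ℕ) :
    (uutil (C := C) (L := L) f T).FactorsThrough
      fun s => ((fun t : Fin (T + 1) => s.H t), fun t : Fin (T + 1) => s.D t) := by
  intro s s' hs
  simp only [Prod.mk.injEq, funext_iff] at hs
  obtain ⟨hH, hD⟩ := hs
  refine sum_congr rfl fun t ht => ?_
  have htT : t ≤ T := (mem_Icc.mp ht).2
  rw [hH ⟨t, by omega⟩]
  exact sum_congr rfl fun i _ => by
    rw [uage_congr (n := T) (fun t ht => hD ⟨t, by omega⟩) i t htT]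

end USchedule

theorem full_backhaul_wlog_general
    (ι : Type*) [Fintype ι] [DecidableEq ι] (C L T : ℕ)
    (hLC : L ≤ C) (hCI : C ≤ Fintype.card ι)
    (f : ι → ℕ → ℝ)
    (hmono : ∀ i a a', a ≤ a' → f i a' ≤ f i a)
    (hnn : ∀ i a, 0 ≤ f i a) :
    (∀ sch : USchedule ι C L, ∃ sch' : USchedule ι C L,
        uutil f T sch ≤ uutil f T sch' ∧
        ∀ t, 1 ≤ t → t ≤ T → (sch'.D t).card = min L (Fintype.card ι)) ∧
    (∃ sch : USchedule ι C L,
        (∀ sch' : USchedule ι C L, uutil f T sch' ≤ uutil f T sch) ∧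
        ∀ t, 1 ≤ t → t ≤ T → (sch.D t).card = min L (Fintype.card ι)) := by
  have hLI : L ≤ Fintype.card ι := hLC.trans hCI
  have improve : ∀ sch : USchedule ι C L, ∃ sch' : USchedule ι C L,
      uutil f T sch ≤ uutil f T sch' ∧
      ∀ t, 1 ≤ t → t ≤ T → (sch'.D t).card = min L (Fintype.card ι) := fun sch => by
    obtain ⟨sch', hH, hD, hcard⟩ := sch.exists_superset_card_D_eq hLC hLI
    exact ⟨sch', USchedule.uutil_le_of_subset hmono hnn T hH hD,
      fun t ht _ => by rw [hcard t (by omega), min_eq_left hLI]⟩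
  obtain ⟨opt, hopt⟩ := (USchedule.uutil_factorsThrough (C := C) (L := L) f T).exists_forall_le
  obtain ⟨sch', hle, hcard⟩ := improve opt
  exact ⟨improve, sch', fun s => (hopt s).trans hle, hcard⟩

/-- with nonincreasing, nonnegative utilities and `1 ≤ L ≤ C ≤ I`,
any schedule can be modified, without decreasing total utility, into one downloading
exactly `min(L, I)` items in every slot; in particular there exists an optimal
schedule downloading exactly `min(L, I)` items in every slot. -/
theorem full_backhaul_wlog
    (ι : Type*) [Fintype ι] [DecidableEq ι] (C L T : ℕ)
    (hL : 1 ≤ L) (hLC : L ≤ C) (hCI : C ≤ Fintype.card ι)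
    (f : ι → ℕ → ℝ)
    (hmono : ∀ i a a', a ≤ a' → f i a' ≤ f i a)
    (hnn : ∀ i a, 0 ≤ f i a) :
    (∀ sch : USchedule ι C L, ∃ sch' : USchedule ι C L,
        uutil f T sch ≤ uutil f T sch' ∧
        ∀ t, 1 ≤ t → t ≤ T → (sch'.D t).card = min L (Fintype.card ι)) ∧
    (∃ sch : USchedule ι C L,
        (∀ sch' : USchedule ι C L, uutil f T sch' ≤ uutil f T sch) ∧
        ∀ t, 1 ≤ t → t ≤ T → (sch.D t).card = min L (Fintype.card ι)) :=
  full_backhaul_wlog_general ι C L T hLC hCI f hmono hnn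
end
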